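/- Let Ω_pl ⊂ ℝ² be an open convex set and let L₁, L₂ be two distinct lines whose intersections with closure(Ω_pl) are nonempty closed segments that are disjoint from each other, and such that the open segments L_i ∩ Ω_pl are nonempty. Then the set C := Ω_pl ∩ H₁ ∩ H₂, where H_i is an open half-plane with ∂H_i = L_i containing the other segment, is a nonempty open convex set whose boundary contains both segments L₁ ∩ Ω_pl and L₂ ∩ Ω_pl. -/

import Mathlib

open MeasureTheory Set Filter Bornology
open scoped RealInnerProductSpace ENNReal NNReal Topology
noncomputable section

abbrev E2 := EuclideanSpace ℝ (Fin 2)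

/-!
Pick `x₁ ∈ L₁ ∩ Ωpl` and `x₂ ∈ L₂ ∩ Ωpl`; their midpoint lies in `Ωpl ∩ H₁ ∩ H₂`.
A point `x ∈ L₁ ∩ Ωpl` is not in `H₁`, but the open segment from `x` to any point `m` of
`Ωpl ∩ H₁ ∩ H₂` lies in that set (`x` is in the closed half-plane `closure H₁` and in `H₂`),
so `x` is a limit of points of the set, i.e. on its frontier.
-/

theorem mem_frontier_of_openSegment_subset {E : Type*} [AddCommGroup E] [TopologicalSpace E]
    [ContinuousAdd E] [Module ℝ E] [ContinuousSMul ℝ E] {s : Set E} {x y : E}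
    (hx : x ∉ s) (hxy : openSegment ℝ x y ⊆ s) : x ∈ frontier s :=
  ⟨closure_mono hxy (segment_subset_closure_openSegment (left_mem_segment ℝ x y)),
    fun h => hx (interior_subset h)⟩

section InnerProductSpace

variable {E : Type*} [NormedAddCommGroup E] [InnerProductSpace ℝ E]

theorem openSegment_subset_setOf_inner_lt {n x y : E} {c : ℝ}
    (hx : ⟪n, x⟫ ≤ c) (hy : ⟪n, y⟫ < c) : openSegment ℝ x y ⊆ {z | ⟪n, z⟫ < c} := by
  rintro _ ⟨a, b, ha, hb, hab, rfl⟩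
  simp only [mem_ofPred_eq, inner_add_right, real_inner_smul_right]
  calc a * ⟪n, x⟫ + b * ⟪n, y⟫
      < a * c + b * c :=
        add_lt_add_of_le_of_lt (mul_le_mul_of_nonneg_left hx ha.le) (mul_lt_mul_of_pos_left hy hb)
    _ = c := by rw [← add_mul, hab, one_mul]

theorem isOpen_setOf_inner_lt (n : E) (c : ℝ) : IsOpen {z : E | ⟪n, z⟫ < c} :=
  isOpen_lt (continuous_const.inner continuous_id) continuous_const

theorem convex_setOf_inner_lt (n : E) (c : ℝ) : Convex ℝ {z : E | ⟪n, z⟫ < c} :=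
  convex_halfSpace_lt (innerₛₗ ℝ n).isLinear c

theorem mem_frontier_inter_setOf_inner_lt_of_inner_eq {Ω : Set E} (hΩ : Convex ℝ Ω)
    {n₁ n₂ x m : E} {c₁ c₂ : ℝ} (hm : m ∈ Ω ∩ {z | ⟪n₁, z⟫ < c₁} ∩ {z | ⟪n₂, z⟫ < c₂})
    (hxΩ : x ∈ Ω) (hx₁ : ⟪n₁, x⟫ = c₁) (hx₂ : ⟪n₂, x⟫ < c₂) :
    x ∈ frontier (Ω ∩ {z | ⟪n₁, z⟫ < c₁} ∩ {z | ⟪n₂, z⟫ < c₂}) := by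
  obtain ⟨⟨hmΩ, hm₁⟩, hm₂⟩ := hm
  refine mem_frontier_of_openSegment_subset (y := m) (fun h => h.1.2.ne hx₁) ?_
  exact subset_inter (subset_inter (hΩ.openSegment_subset hxΩ hmΩ)
    (openSegment_subset_setOf_inner_lt hx₁.le hm₁))
    (openSegment_subset_setOf_inner_lt hx₂.le hm₂)

end InnerProductSpace

theorem stmt7_general (Ωpl : Set E2) (ho : IsOpen Ωpl) (hc : Convex ℝ Ωpl)
    (n₁ n₂ : E2) (c₁ c₂ : ℝ)
    (L₁ L₂ H₁ H₂ : Set E2)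
    (hL₁ : L₁ = {x : E2 | ⟪n₁, x⟫ = c₁}) (hL₂ : L₂ = {x : E2 | ⟪n₂, x⟫ = c₂})
    (hH₁ : H₁ = {x : E2 | ⟪n₁, x⟫ < c₁}) (hH₂ : H₂ = {x : E2 | ⟪n₂, x⟫ < c₂})
    (h1ne : (L₁ ∩ Ωpl).Nonempty) (h2ne : (L₂ ∩ Ωpl).Nonempty)
    (h21 : L₂ ∩ closure Ωpl ⊆ H₁) (h12 : L₁ ∩ closure Ωpl ⊆ H₂) :
    (Ωpl ∩ H₁ ∩ H₂).Nonempty ∧ IsOpen (Ωpl ∩ H₁ ∩ H₂) ∧ Convex ℝ (Ωpl ∩ H₁ ∩ H₂) ∧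
      L₁ ∩ Ωpl ⊆ frontier (Ωpl ∩ H₁ ∩ H₂) ∧ L₂ ∩ Ωpl ⊆ frontier (Ωpl ∩ H₁ ∩ H₂) := by
  subst hL₁ hL₂ hH₁ hH₂
  have h₁₂ : ∀ x ∈ {x | ⟪n₁, x⟫ = c₁} ∩ Ωpl, ⟪n₂, x⟫ < c₂ :=
    fun x hx => h12 ⟨hx.1, subset_closure hx.2⟩
  have h₂₁ : ∀ x ∈ {x | ⟪n₂, x⟫ = c₂} ∩ Ωpl, ⟪n₁, x⟫ < c₁ :=
    fun x hx => h21 ⟨hx.1, subset_closure hx.2⟩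
  obtain ⟨x₁, hx₁⟩ := h1ne
  obtain ⟨x₂, hx₂⟩ := h2ne
  have hm : midpoint ℝ x₁ x₂ ∈ Ωpl ∩ {x | ⟪n₁, x⟫ < c₁} ∩ {x | ⟪n₂, x⟫ < c₂} := by
    have hmid := midpoint_mem_openSegment (𝕜 := ℝ) x₁ x₂
    refine ⟨⟨hc.openSegment_subset hx₁.2 hx₂.2 hmid, ?_⟩, ?_⟩
    · exact openSegment_subset_setOf_inner_lt hx₁.1.le (h₂₁ x₂ hx₂) hmid
    · exact openSegment_subset_setOf_inner_lt hx₂.1.le (h₁₂ x₁ hx₁)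
        (openSegment_symm ℝ x₁ x₂ ▸ hmid)
  refine ⟨⟨_, hm⟩, (ho.inter (isOpen_setOf_inner_lt _ _)).inter (isOpen_setOf_inner_lt _ _),
    (hc.inter (convex_setOf_inner_lt _ _)).inter (convex_setOf_inner_lt _ _), ?_, ?_⟩
  · exact fun x hx => mem_frontier_inter_setOf_inner_lt_of_inner_eq hc hm hx.2 hx.1 (h₁₂ x hx)
  · intro x hx
    rw [inter_right_comm] at hm ⊢
    exact mem_frontier_inter_setOf_inner_lt_of_inner_eq hc hm hx.2 hx.1 (h₂₁ x hx)

theorem stmt7 (Ωpl : Set E2) (ho : IsOpen Ωpl) (hc : Convex ℝ Ωpl)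
    (n₁ n₂ : E2) (c₁ c₂ : ℝ) (hn₁ : n₁ ≠ 0) (hn₂ : n₂ ≠ 0)
    (L₁ L₂ H₁ H₂ : Set E2)
    (hL₁ : L₁ = {x : E2 | ⟪n₁, x⟫ = c₁}) (hL₂ : L₂ = {x : E2 | ⟪n₂, x⟫ = c₂})
    (hH₁ : H₁ = {x : E2 | ⟪n₁, x⟫ < c₁}) (hH₂ : H₂ = {x : E2 | ⟪n₂, x⟫ < c₂})
    (h1ne : (L₁ ∩ Ωpl).Nonempty) (h2ne : (L₂ ∩ Ωpl).Nonempty)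
    (h1cl : (L₁ ∩ closure Ωpl).Nonempty) (h2cl : (L₂ ∩ closure Ωpl).Nonempty)
    (hdisj : (L₁ ∩ closure Ωpl) ∩ (L₂ ∩ closure Ωpl) = ∅)
    (h21 : L₂ ∩ closure Ωpl ⊆ H₁) (h12 : L₁ ∩ closure Ωpl ⊆ H₂) :
    (Ωpl ∩ H₁ ∩ H₂).Nonempty ∧ IsOpen (Ωpl ∩ H₁ ∩ H₂) ∧ Convex ℝ (Ωpl ∩ H₁ ∩ H₂) ∧
      L₁ ∩ Ωpl ⊆ frontier (Ωpl ∩ H₁ ∩ H₂) ∧ L₂ ∩ Ωpl ⊆ frontier (Ωpl ∩ H₁ ∩ H₂) :=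
  stmt7_general Ωpl ho hc n₁ n₂ c₁ c₂ L₁ L₂ H₁ H₂ hL₁ hL₂ hH₁ hH₂ h1ne h2ne h21 h12
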